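/- Let k ≥ 2 and let G be a connected graph with 2·n(G) ≤ k. Then sg(K_k □ G) = k. -/

import Mathlib

open SimpleGraph

/-- A choice of one fixed shortest path (geodesic) between each pair of vertices,
symmetric in the sense that the path from `v` to `u` is the reverse of the one
from `u` to `v`. -/
def StrongGeodeticChoice {V : Type*} (G : SimpleGraph V) (p : ∀ u v : V, G.Walk u v) : Prop :=
  ∀ u v : V, (p u v).IsPath ∧ (p u v).length = G.dist u v ∧ p v u = (p u v).reverse

/-- `S` is a strong geodetic set of `G`: one can fix one shortest path between each
pair of vertices of `S` so that every vertex of `G` lies on some fixed path. -/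
def IsStrongGeodeticSet {V : Type*} (G : SimpleGraph V) (S : Set V) : Prop :=
  ∃ p : ∀ u v : V, G.Walk u v, StrongGeodeticChoice G p ∧
    ∀ w : V, ∃ u ∈ S, ∃ v ∈ S, w ∈ (p u v).support

/-- The strong geodetic number of `G`. -/
noncomputable def sg {V : Type*} (G : SimpleGraph V) : ℕ :=
  sInf {n | ∃ S : Set V, S.ncard = n ∧ IsStrongGeodeticSet G S}

/-- The strong geodetic core number of `G`: the minimum, over minimum strong
geodetic sets `S` together with a choice of fixed geodesics witnessing them,
of the size of a subset `X ⊆ S` such that the fixed paths with an endpoint in `X`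
already cover all vertices. -/
noncomputable def sgc {V : Type*} (G : SimpleGraph V) : ℕ :=
  sInf {k | ∃ (S X : Set V) (p : ∀ u v : V, G.Walk u v),
    StrongGeodeticChoice G p ∧ S.ncard = sg G ∧
    (∀ w : V, ∃ u ∈ S, ∃ v ∈ S, w ∈ (p u v).support) ∧
    X ⊆ S ∧ X.ncard = k ∧
    (∀ w : V, ∃ u ∈ X, ∃ v ∈ S, w ∈ (p u v).support)}

/-- `A` is a geodetic set: every vertex lies on some shortest path between two
vertices of `A`. -/
def IsGeodeticSet {V : Type*} (G : SimpleGraph V) (A : Set V) : Prop :=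
  ∀ w : V, ∃ u ∈ A, ∃ v ∈ A, ∃ q : G.Walk u v, q.length = G.dist u v ∧ w ∈ q.support

/-- The geodetic number of `G`. -/
noncomputable def geodeticNumber {V : Type*} (G : SimpleGraph V) : ℕ :=
  sInf {n | ∃ A : Set V, A.ncard = n ∧ IsGeodeticSet G A}


/-!
A geodesic of `K_k □ G` from layer `a` to layer `b` has length `d_K(a, b) + d_G`, with
`d_K ≤ 1`, so it never visits a third layer; hence a strong geodetic set meets all `k` layers.

Conversely, label the layers by vertices of `G` via `f` and take the vertices `(a, f a)`.
Between layers `a ≠ b` one geodesic runs inside layer `a` to `(a, f b)` and then jumps. Orient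
the pairs of layers by an asymmetric relation `R` and route each pair with `R a b` through
layer `a`; everything is covered once each layer `a` reaches every other label `x` as `f b` with
`R a b`, and `k ≥ 2n` leaves room for such `f` and `R`.
-/

namespace SimpleGraph

variable {V α β : Type*}

theorem sg_eq_of_isStrongGeodeticSet {Γ : SimpleGraph V} {S : Set V} {m : ℕ}
    (hS : IsStrongGeodeticSet Γ S)
    (hcard : S.ncard = m) (hmin : ∀ T, IsStrongGeodeticSet Γ T → m ≤ T.ncard) : sg Γ = m :=
  le_antisymm (Nat.sInf_le ⟨S, hcard, hS⟩)
    (le_csInf ⟨_, S, hcard, hS⟩ (by rintro _ ⟨T, rfl, hT⟩; exact hmin T hT))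

theorem Walk.dist_add_dist_le_length {Γ : SimpleGraph V} {u v w : V}
    (p : Γ.Walk u v) (hw : w ∈ p.support) : Γ.dist u w + Γ.dist w v ≤ p.length := by
  classical
  rw [← p.take_spec hw, Walk.length_append]
  exact add_le_add (dist_le _) (dist_le _)

theorem exists_strongGeodeticChoice_of_geodesics {Γ : SimpleGraph V} (q : ∀ u v, Γ.Walk u v)
    (hq : ∀ u v, (q u v).length = Γ.dist u v) :
    ∃ p, StrongGeodeticChoice Γ p ∧
      ∀ u v w, w ∈ (q u v).support → w ∈ (q v u).support → w ∈ (p u v).support := by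
  classical
  let p : ∀ u v, Γ.Walk u v := fun u v =>
    if WellOrderingRel v u then (q v u).reverse else q u v
  have hp : ∀ u v, (p u v).length = Γ.dist u v := fun u v => by
    by_cases h : WellOrderingRel v u <;> simp [p, h, hq, dist_comm]
  refine ⟨p, fun u v => ⟨(p u v).isPath_of_length_eq_dist (hp u v), hp u v, ?_⟩, ?_⟩
  · rcases trichotomous_of WellOrderingRel u v with h | rfl | h
    · simp [p, h, asymm h]
    · have hnil : (q u u).Nil := Walk.length_eq_zero_iff.mp (by simp [hq])
      simp [p, irrefl u, hnil.eq_nil]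
    · simp [p, h, asymm h]
  · intro u v w hw hw'
    by_cases h : WellOrderingRel v u <;> simp [p, h, hw, hw']

variable {K : SimpleGraph α} {H : SimpleGraph β}

theorem dist_boxProd {x y : α × β} (hK : K.Reachable x.1 y.1) (hH : H.Reachable x.2 y.2) :
    (K □ H).dist x y = K.dist x.1 y.1 + H.dist x.2 y.2 := by
  rw [dist, dist, dist, edist_boxProd, ENat.toNat_add (edist_ne_top_iff_reachable.mpr hK)
    (edist_ne_top_iff_reachable.mpr hH)]

theorem exists_geodesic_boxProd_through_left {a b : α} {x y : β} (hab : K.Adj a b)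
    (hxy : H.Reachable x y) :
    ∃ p : (K □ H).Walk (a, x) (b, y),
      p.length = (K □ H).dist (a, x) (b, y) ∧ (a, y) ∈ p.support := by
  obtain ⟨g, hg⟩ := hxy.exists_walk_length_eq_dist
  refine ⟨(g.boxProdRight K a).concat (boxProd_adj_left.mpr hab), ?_, ?_⟩
  · rw [dist_boxProd hab.reachable hxy, dist_eq_one_iff_adj.mpr hab, Walk.length_concat,
      add_comm, ← hg]
    exact congrArg (1 + ·) (Walk.length_map _ g)
  · rw [Walk.concat_eq_append]
    exact (Walk.mem_support_append_iff _ _).mpr (Or.inl (Walk.end_mem_support _))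

theorem exists_strongGeodeticChoice_boxProd (hK : K.Connected) (hH : H.Connected)
    (R : α → α → Prop) (hadj : ∀ a b, R a b → K.Adj a b)
    (hasymm : ∀ a b, R a b → ¬ R b a) :
    ∃ p, StrongGeodeticChoice (K □ H) p ∧
      ∀ a b x y, R a b → (a, y) ∈ (p (a, x) (b, y)).support := by
  classical
  choose r hr_len hr_mem using fun a b (hab : K.Adj a b) x y =>
    exists_geodesic_boxProd_through_left (H := H) hab (hH x y)
  choose g hg using (hK.boxProd hH).exists_walk_length_eq_dist
  let q : ∀ u v, (K □ H).Walk u v := fun u v =>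
    if h : R u.1 v.1 then r _ _ (hadj _ _ h) u.2 v.2
    else if h' : R v.1 u.1 then (r _ _ (hadj _ _ h') v.2 u.2).reverse else g u v
  have hq : ∀ u v, (q u v).length = (K □ H).dist u v := fun u v => by
    by_cases h : R u.1 v.1
    · simp [q, h, hr_len]
    by_cases h' : R v.1 u.1
    · simp [q, h, h', hr_len, dist_comm]
    · simp [q, h, h', hg]
  obtain ⟨p, hp, hpq⟩ := exists_strongGeodeticChoice_of_geodesics q hq
  refine ⟨p, hp, fun a b x y hab => hpq _ _ _ ?_ ?_⟩
  · simp [q, hab, hr_mem]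
  · simp [q, hab, hasymm a b hab, hr_mem]

theorem isStrongGeodeticSet_range_boxProd (hK : K.Connected) (hH : H.Connected) (f : α → β)
    (R : α → α → Prop) (hadj : ∀ a b, R a b → K.Adj a b)
    (hasymm : ∀ a b, R a b → ¬ R b a)
    (hcover : ∀ a x, x ≠ f a → ∃ b, f b = x ∧ R a b) :
    IsStrongGeodeticSet (K □ H) (Set.range fun a => (a, f a)) := by
  obtain ⟨p, hp, hpR⟩ := exists_strongGeodeticChoice_boxProd hK hH R hadj hasymm
  refine ⟨p, hp, fun ⟨a, x⟩ => ?_⟩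
  by_cases hx : x = f a
  · subst hx
    exact ⟨_, ⟨a, rfl⟩, _, ⟨a, rfl⟩, Walk.start_mem_support _⟩
  · obtain ⟨b, rfl, hab⟩ := hcover a x hx
    exact ⟨_, ⟨a, rfl⟩, _, ⟨b, rfl⟩, hpR a b (f a) (f b) hab⟩

theorem Walk.fst_eq_or_fst_eq_of_length_eq_dist {x y z : α × β}
    (p : ((⊤ : SimpleGraph α) □ H).Walk x y) (hH : H.Connected)
    (hp : p.length = (⊤ □ H).dist x y) (hz : z ∈ p.support) : z.1 = x.1 ∨ z.1 = y.1 := by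
  have hdist := p.dist_add_dist_le_length hz
  rw [hp, dist_boxProd (preconnected_top _ _) (hH _ _),
    dist_boxProd (preconnected_top _ _) (hH _ _), dist_boxProd (preconnected_top _ _) (hH _ _)]
    at hdist
  have htri : H.dist x.2 y.2 ≤ H.dist x.2 z.2 + H.dist z.2 y.2 := hH.dist_triangle
  have hxy : (⊤ : SimpleGraph α).dist x.1 y.1 ≤ 1 := by
    rcases eq_or_ne x.1 y.1 with h | h <;> simp [h, dist_top_of_ne]
  by_contra! h
  rw [dist_top_of_ne h.1.symm, dist_top_of_ne h.2] at hdist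
  omega

theorem card_le_ncard_of_isStrongGeodeticSet_top_boxProd [Finite α] [Finite β] (hH : H.Connected)
    {S : Set (α × β)} (hS : IsStrongGeodeticSet ((⊤ : SimpleGraph α) □ H) S) :
    Nat.card α ≤ S.ncard := by
  obtain ⟨p, hp, hcover⟩ := hS
  obtain ⟨y⟩ := hH.nonempty
  have hfst : Prod.fst '' S = Set.univ := Set.eq_univ_of_forall fun a => by
    obtain ⟨u, hu, v, hv, hmem⟩ := hcover (a, y)
    rcases (p u v).fst_eq_or_fst_eq_of_length_eq_dist hH (hp u v).2.1 hmem with h | h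
    · exact ⟨u, hu, h.symm⟩
    · exact ⟨v, hv, h.symm⟩
  rw [← Set.ncard_univ, ← hfst]
  exact Set.ncard_image_le S.toFinite

end SimpleGraph

/-- Layer `i` gets label `i mod n`, and `R i j` holds when the labels differ and
`i mod n < j mod n` exactly if `i / n + j / n` is even. Each label `t` is carried by the layers
`t` and `t + n`, whose quotients by `n` differ by one, so `R i t` or `R i (t + n)`. -/
theorem exists_labeling_and_routing {W : Type*} [Fintype W] [Nonempty W] {k : ℕ}
    (h : 2 * Fintype.card W ≤ k) :
    ∃ (f : Fin k → W) (R : Fin k → Fin k → Prop), (∀ i j, R i j → ¬ R j i) ∧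
      ∀ i x, x ≠ f i → ∃ j, f j = x ∧ R i j := by
  set n := Fintype.card W
  have hn : 0 < n := Fintype.card_pos
  let e := Fintype.equivFin W
  refine ⟨fun i => e.symm ⟨i % n, Nat.mod_lt _ hn⟩,
    fun i j => i.val % n ≠ j.val % n ∧ (i.val % n < j.val % n ↔ Even (i.val / n + j.val / n)),
    ?_, ?_⟩
  · rintro i j ⟨hne, hij⟩ ⟨-, hji⟩
    rw [add_comm] at hji
    rcases lt_or_gt_of_ne hne with hlt | hlt
    · exact absurd (hji.mpr (hij.mp hlt)) hlt.not_gt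
    · exact absurd (hij.mpr (hji.mp hlt)) hlt.not_gt
  · intro i x hx
    have ht : (e x : ℕ) < n := (e x).isLt
    have hti : (e x : ℕ) ≠ i.val % n := fun h => hx (by simp [← h])
    have hlabel : ∀ j : Fin k, j.val % n = e x → e.symm ⟨j % n, Nat.mod_lt _ hn⟩ = x :=
      fun j hj => by simp [hj]
    by_cases hpar : (i.val % n < e x ↔ Even (i.val / n))
    · refine ⟨⟨e x, by omega⟩, hlabel _ (Nat.mod_eq_of_lt ht), ?_⟩
      dsimp only
      rw [Nat.mod_eq_of_lt ht, Nat.div_eq_of_lt ht, add_zero]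
      exact ⟨hti.symm, hpar⟩
    · have hmod : (e x + n) % n = e x := by rw [Nat.add_mod_right, Nat.mod_eq_of_lt ht]
      refine ⟨⟨e x + n, by omega⟩, hlabel _ hmod, ?_⟩
      dsimp only
      rw [hmod, Nat.add_div_right _ hn, Nat.div_eq_of_lt ht, zero_add, Nat.even_add_one]
      exact ⟨hti.symm, by tauto⟩

theorem stmt16_general {W : Type*} [Fintype W] (k : ℕ)
    (G : SimpleGraph W) (hG : G.Connected) (h : 2 * Fintype.card W ≤ k) :
    sg (completeGraph (Fin k) □ G) = k := by
  have := hG.nonempty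
  have : Nonempty (Fin k) := ⟨⟨0, by have := Fintype.card_pos (α := W); omega⟩⟩
  obtain ⟨f, R, hasymm, hcover⟩ := exists_labeling_and_routing h
  have hadj : ∀ i j, R i j → (⊤ : SimpleGraph (Fin k)).Adj i j := fun i j hij =>
    top_adj i j |>.mpr fun hij' => hasymm i j hij (hij' ▸ hij)
  have hS := isStrongGeodeticSet_range_boxProd connected_top hG f R hadj hasymm hcover
  have hcard : (Set.range fun i : Fin k => (i, f i)).ncard = k := by
    rw [Set.ncard_range_of_injective fun i j hij => congrArg Prod.fst hij, Nat.card_fin]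
  rw [completeGraph_eq_top]
  exact sg_eq_of_isStrongGeodeticSet hS hcard fun T hT => by
    simpa using card_le_ncard_of_isStrongGeodeticSet_top_boxProd hG hT

theorem stmt16 {W : Type*} [Fintype W] (k : ℕ) (hk : 2 ≤ k)
    (G : SimpleGraph W) (hG : G.Connected) (h : 2 * Fintype.card W ≤ k) :
    sg (completeGraph (Fin k) □ G) = k :=
  stmt16_general k G hG h
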